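/- arXiv:0904.3062 — 4 statements merged into one kernel-verified Lean document; each statement's English description precedes it below -/
import Mathlib

section
/- For any counting chain, there is at most one function f : ℕ → ℝ such that E[f(X_n)] = n holds for all n ≥ 0 (the unbiased count estimator is unique). -/
/-- `stepProb q n k` is the probability `P(X_n = k)` for the counting chain with
transition probabilities `q`: the chain starts at `X_0 = 0` and from state `k`
moves to `k+1` with probability `q k`, otherwise stays at `k`. -/
noncomputable def stepProb (q : ℕ → ℝ) : ℕ → ℕ → ℝ
  | 0, 0 => 1
  | 0, _ + 1 => 0
  | n + 1, 0 => (1 - q 0) * stepProb q n 0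
  | n + 1, k + 1 => (1 - q (k + 1)) * stepProb q n (k + 1) + q k * stepProb q n k

lemma stepProb_eq_zero (q : ℕ → ℝ) : ∀ n k, n < k → stepProb q n k = 0 := by
  intro n
  induction n with
  | zero =>
    intro k hk
    match k, hk with
    | j + 1, _ => rfl
  | succ n ih =>
    intro k hk
    match k, hk with
    | j + 1, hk =>
      have h1 : n < j + 1 := by omega
      have h2 : n < j := by omega
      show (1 - q (j + 1)) * stepProb q n (j + 1) + q j * stepProb q n j = 0
      rw [ih _ h1, ih _ h2]; ring

lemma stepProb_diag_pos (q : ℕ → ℝ) (hq : ∀ k, 0 < q k ∧ q k ≤ 1) :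
    ∀ n, 0 < stepProb q n n := by
  intro n
  induction n with
  | zero => norm_num [stepProb]
  | succ n ih =>
    show 0 < (1 - q (n + 1)) * stepProb q n (n + 1) + q n * stepProb q n n
    rw [stepProb_eq_zero q n (n + 1) (by omega)]
    have := hq n
    nlinarith

/-- For any counting chain, there is at most one function `f : ℕ → ℝ`
with `E[f(X_n)] = n` for all `n` (the unbiased count estimator is unique). Since
`P(X_n = k) = 0` for `k > n`, the expectation is the finite sum over `k ≤ n`. -/
theorem stmt_2 (q : ℕ → ℝ) (hq : ∀ k, 0 < q k ∧ q k ≤ 1)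
    (f g : ℕ → ℝ)
    (hf : ∀ n, ∑ k ∈ Finset.range (n + 1), stepProb q n k * f k = n)
    (hg : ∀ n, ∑ k ∈ Finset.range (n + 1), stepProb q n k * g k = n) :
    f = g := by
  funext n
  induction n using Nat.strong_induction_on with
  | _ n ih =>
    have h : ∑ k ∈ Finset.range (n + 1), stepProb q n k * (f k - g k) = 0 := by
      have := hf n
      have := hg n
      simp only [mul_sub, Finset.sum_sub_distrib]
      linarith
    rw [Finset.sum_range_succ] at h
    have hz : ∑ k ∈ Finset.range n, stepProb q n k * (f k - g k) = 0 := by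
      apply Finset.sum_eq_zero
      intro k hk
      rw [ih k (Finset.mem_range.mp hk)]
      ring
    rw [hz, zero_add] at h
    have := stepProb_diag_pos q hq n
    have : f n - g n = 0 := by
      rcases mul_eq_zero.mp h with h' | h'
      · linarith
      · exact h'
    linarith
end

section
/- For any counting chain with transition probabilities (q_k), the function f defined by f(0) = 0 and f(k) = 1/q_0 + 1/q_1 + ... + 1/q_{k-1} for k > 0 satisfies E[f(X_n)] = n for all n ≥ 0. -/
lemma stepProb_sum (q : ℕ → ℝ) :
    ∀ n, ∑ k ∈ Finset.range (n + 1), stepProb q n k = 1 := by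
  intro n
  induction n with
  | zero => simp [stepProb]
  | succ n ih =>
    rw [Finset.sum_range_succ']
    have h0 : stepProb q (n + 1) 0 = (1 - q 0) * stepProb q n 0 := rfl
    have hstep : ∀ k, stepProb q (n + 1) (k + 1)
        = (1 - q (k + 1)) * stepProb q n (k + 1) + q k * stepProb q n k := fun k => rfl
    simp only [hstep, h0, Finset.sum_add_distrib]
    have h1 : ∑ k ∈ Finset.range (n + 1), (1 - q (k + 1)) * stepProb q n (k + 1)
        + (1 - q 0) * stepProb q n 0
        = ∑ k ∈ Finset.range (n + 2), (1 - q k) * stepProb q n k :=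
      (Finset.sum_range_succ' (fun k => (1 - q k) * stepProb q n k) (n + 1)).symm
    have h2 : ∑ k ∈ Finset.range (n + 2), (1 - q k) * stepProb q n k
        = ∑ k ∈ Finset.range (n + 1), (1 - q k) * stepProb q n k := by
      rw [Finset.sum_range_succ, stepProb_eq_zero q n (n + 1) (by omega)]
      ring
    rw [add_right_comm, h1, h2, ← Finset.sum_add_distrib]
    calc ∑ k ∈ Finset.range (n + 1), ((1 - q k) * stepProb q n k + q k * stepProb q n k)
        = ∑ k ∈ Finset.range (n + 1), stepProb q n k := by
          apply Finset.sum_congr rfl; intro k _; ring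
      _ = 1 := ih

/-- For any counting chain, the function `f` with `f 0 = 0` and
`f k = 1/q 0 + ⋯ + 1/q (k-1)` satisfies `E[f(X_n)] = n` for all `n`. -/
theorem stmt_3 (q : ℕ → ℝ) (hq : ∀ k, 0 < q k ∧ q k ≤ 1)
    (f : ℕ → ℝ) (hf : ∀ k, f k = ∑ i ∈ Finset.range k, (q i)⁻¹) :
    ∀ n, ∑ k ∈ Finset.range (n + 1), stepProb q n k * f k = n := by
  have hf0 : f 0 = 0 := by simp [hf]
  have hfs : ∀ k, f (k + 1) = f k + (q k)⁻¹ := by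
    intro k; rw [hf, hf, Finset.sum_range_succ]
  intro n
  induction n with
  | zero => simp [stepProb, hf0]
  | succ n ih =>
    rw [Finset.sum_range_succ']
    have h0 : stepProb q (n + 1) 0 = (1 - q 0) * stepProb q n 0 := rfl
    have hstep : ∀ k, stepProb q (n + 1) (k + 1)
        = (1 - q (k + 1)) * stepProb q n (k + 1) + q k * stepProb q n k := fun k => rfl
    have hq1 : ∀ k, q k * (q k)⁻¹ = 1 := fun k => mul_inv_cancel₀ (hq k).1.ne'
    calc ∑ k ∈ Finset.range (n + 1), stepProb q (n + 1) (k + 1) * f (k + 1)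
          + stepProb q (n + 1) 0 * f 0
        = ∑ k ∈ Finset.range (n + 1),
            ((1 - q (k + 1)) * stepProb q n (k + 1) * f (k + 1)
              + q k * stepProb q n k * f k + stepProb q n k) := by
          rw [hf0, mul_zero, add_zero]
          apply Finset.sum_congr rfl
          intro k _
          rw [hstep, hfs]
          linear_combination stepProb q n k * hq1 k
      _ = (∑ k ∈ Finset.range (n + 1), (1 - q (k + 1)) * stepProb q n (k + 1) * f (k + 1))
            + (∑ k ∈ Finset.range (n + 1), q k * stepProb q n k * f k)
            + ∑ k ∈ Finset.range (n + 1), stepProb q n k := by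
          rw [Finset.sum_add_distrib, Finset.sum_add_distrib]
      _ = (∑ k ∈ Finset.range (n + 1), (1 - q k) * stepProb q n k * f k)
            + (∑ k ∈ Finset.range (n + 1), q k * stepProb q n k * f k) + 1 := by
          rw [stepProb_sum]
          congr 2
          have : ∑ k ∈ Finset.range (n + 1), (1 - q (k + 1)) * stepProb q n (k + 1) * f (k + 1)
              + (1 - q 0) * stepProb q n 0 * f 0
              = ∑ k ∈ Finset.range (n + 2), (1 - q k) * stepProb q n k * f k :=
            (Finset.sum_range_succ' (fun k => (1 - q k) * stepProb q n k * f k) (n + 1)).symm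
          rw [hf0, mul_zero, add_zero] at this
          rw [this, Finset.sum_range_succ, stepProb_eq_zero q n (n + 1) (by omega)]
          ring
      _ = (∑ k ∈ Finset.range (n + 1), stepProb q n k * f k) + 1 := by
          rw [← Finset.sum_add_distrib]
          congr 1
          apply Finset.sum_congr rfl
          intro k _; ring
      _ = (n + 1 : ℕ) := by rw [ih]; push_cast; ring
end

section
/- For a counting chain with unbiased estimator f(k) = Σ_{i<k} 1/q_i, the variance satisfies the recurrence Var f(X_{n+1}) = Var f(X_n) + Σ_{k=0}^n P(X_n = k)/q_k − 1 for all n ≥ 0. -/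
lemma step_sum (q g : ℕ → ℝ) (n : ℕ) :
    ∑ k ∈ Finset.range (n + 2), stepProb q (n + 1) k * g k
      = ∑ k ∈ Finset.range (n + 1), stepProb q n k * ((1 - q k) * g k + q k * g (k + 1)) := by
  have h1 : ∑ k ∈ Finset.range (n + 2), (1 - q k) * stepProb q n k * g k
      = ∑ k ∈ Finset.range (n + 1), (1 - q k) * stepProb q n k * g k := by
    rw [Finset.sum_range_succ, stepProb_eq_zero q n (n + 1) (by omega)]
    ring
  calc ∑ k ∈ Finset.range (n + 2), stepProb q (n + 1) k * g k
      = ∑ k ∈ Finset.range (n + 1), stepProb q (n + 1) (k + 1) * g (k + 1)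
        + stepProb q (n + 1) 0 * g 0 := Finset.sum_range_succ' _ _
    _ = ∑ k ∈ Finset.range (n + 1), ((1 - q (k + 1)) * stepProb q n (k + 1) * g (k + 1)
          + q k * stepProb q n k * g (k + 1))
        + (1 - q 0) * stepProb q n 0 * g 0 := by
        congr 1
        · apply Finset.sum_congr rfl
          intro k _
          show ((1 - q (k + 1)) * stepProb q n (k + 1) + q k * stepProb q n k) * g (k + 1) = _
          ring
    _ = (∑ k ∈ Finset.range (n + 1), (1 - q (k + 1)) * stepProb q n (k + 1) * g (k + 1)
          + (1 - q 0) * stepProb q n 0 * g 0)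
        + ∑ k ∈ Finset.range (n + 1), q k * stepProb q n k * g (k + 1) := by
        rw [Finset.sum_add_distrib]; ring
    _ = ∑ k ∈ Finset.range (n + 2), (1 - q k) * stepProb q n k * g k
        + ∑ k ∈ Finset.range (n + 1), q k * stepProb q n k * g (k + 1) := by
        rw [Finset.sum_range_succ' (fun k => (1 - q k) * stepProb q n k * g k)]
    _ = ∑ k ∈ Finset.range (n + 1), (1 - q k) * stepProb q n k * g k
        + ∑ k ∈ Finset.range (n + 1), q k * stepProb q n k * g (k + 1) := by rw [h1]
    _ = _ := by
        rw [← Finset.sum_add_distrib]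
        apply Finset.sum_congr rfl
        intro k _
        ring

lemma sum_stepProb (q : ℕ → ℝ) (n : ℕ) :
    ∑ k ∈ Finset.range (n + 1), stepProb q n k = 1 := by
  induction n with
  | zero => simp [stepProb]
  | succ n ih =>
    have h := step_sum q (fun _ => 1) n
    simp only [mul_one] at h
    rw [h]
    have h1 : ∀ x, (1 : ℝ) - q x + q x = 1 := fun x => by ring
    simp only [h1, mul_one]
    exact ih

lemma sum_stepProb_mean (q : ℕ → ℝ) (hq : ∀ k, q k ≠ 0) (n : ℕ) :
    ∑ k ∈ Finset.range (n + 1), stepProb q n k * (∑ i ∈ Finset.range k, (q i)⁻¹) = n := by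
  induction n with
  | zero => simp [stepProb]
  | succ n ih =>
    rw [step_sum q (fun k => ∑ i ∈ Finset.range k, (q i)⁻¹) n]
    calc ∑ k ∈ Finset.range (n + 1), stepProb q n k *
          ((1 - q k) * (∑ i ∈ Finset.range k, (q i)⁻¹)
            + q k * (∑ i ∈ Finset.range (k + 1), (q i)⁻¹))
        = ∑ k ∈ Finset.range (n + 1),
            (stepProb q n k * (∑ i ∈ Finset.range k, (q i)⁻¹) + stepProb q n k) := by
          apply Finset.sum_congr rfl
          intro k _
          rw [Finset.sum_range_succ]
          have h0 : q k * (q k)⁻¹ = 1 := mul_inv_cancel₀ (hq k)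
          linear_combination stepProb q n k * h0
      _ = (n : ℝ) + 1 := by rw [Finset.sum_add_distrib, ih, sum_stepProb]
      _ = ((n + 1 : ℕ) : ℝ) := by push_cast; ring

/-- With the unbiased estimator `f k = ∑_{i<k} 1/q i` (so that
`E[f(X_n)] = n` and `Var f(X_n) = E[f(X_n)^2] − n^2`), the variance satisfies
`Var f(X_{n+1}) = Var f(X_n) + ∑_{k=0}^n P(X_n = k)/q k − 1`. -/
theorem stmt_6 (q : ℕ → ℝ) (hq : ∀ k, 0 < q k ∧ q k ≤ 1)
    (f : ℕ → ℝ) (hf : ∀ k, f k = ∑ i ∈ Finset.range k, (q i)⁻¹)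
    (V : ℕ → ℝ)
    (hV : ∀ n, V n = (∑ k ∈ Finset.range (n + 1), stepProb q n k * (f k) ^ 2) - (n : ℝ) ^ 2) :
    ∀ n, V (n + 1) = V n + (∑ k ∈ Finset.range (n + 1), stepProb q n k / q k) - 1 := by
  intro n
  have hq' : ∀ k, q k ≠ 0 := fun k => ne_of_gt (hq k).1
  have hfs : ∀ k, f (k + 1) = f k + (q k)⁻¹ := by
    intro k
    rw [hf, hf, Finset.sum_range_succ]
  have hmean : ∑ k ∈ Finset.range (n + 1), stepProb q n k * f k = n := by
    calc ∑ k ∈ Finset.range (n + 1), stepProb q n k * f k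
        = ∑ k ∈ Finset.range (n + 1), stepProb q n k * (∑ i ∈ Finset.range k, (q i)⁻¹) := by
          apply Finset.sum_congr rfl; intro k _; rw [hf]
      _ = n := sum_stepProb_mean q hq' n
  have key : ∑ k ∈ Finset.range (n + 2), stepProb q (n + 1) k * (f k) ^ 2
      = (∑ k ∈ Finset.range (n + 1), stepProb q n k * (f k) ^ 2)
        + 2 * n + ∑ k ∈ Finset.range (n + 1), stepProb q n k / q k := by
    rw [step_sum q (fun k => (f k) ^ 2) n]
    calc ∑ k ∈ Finset.range (n + 1), stepProb q n k *
          ((1 - q k) * (f k) ^ 2 + q k * (f (k + 1)) ^ 2)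
        = ∑ k ∈ Finset.range (n + 1),
            (stepProb q n k * (f k) ^ 2 + 2 * (stepProb q n k * f k)
              + stepProb q n k / q k) := by
          apply Finset.sum_congr rfl
          intro k _
          rw [hfs k]
          have h0 := hq' k
          field_simp
          ring
      _ = (∑ k ∈ Finset.range (n + 1), stepProb q n k * (f k) ^ 2)
            + 2 * n + ∑ k ∈ Finset.range (n + 1), stepProb q n k / q k := by
          rw [Finset.sum_add_distrib, Finset.sum_add_distrib, ← Finset.mul_sum, hmean]
  rw [hV, hV, key]
  push_cast
  ring
end

section
/- For the floating-point counter with parameter M = 2^d, the accuracy A_n = sqrt(Var f(X_n))/n satisfies limsup_{n→∞} A_n ≤ sqrt(3/(8M − 3)) and liminf_{n→∞} A_n ≥ sqrt(1/(3M − 1)). -/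
namespace Stmt18Aux

noncomputable def qf (M : ℕ) (k : ℕ) : ℝ := ((2:ℝ)^(k/M))⁻¹
noncomputable def ff (M : ℕ) (k : ℕ) : ℝ := ∑ i ∈ Finset.range k, (2:ℝ)^(i/M)
noncomputable def hh (α : ℝ) (M : ℕ) (k : ℕ) : ℝ :=
  ∑ i ∈ Finset.range k, (2:ℝ)^(i/M) * (((2:ℝ)^(i/M) - 1) - α * (2 * ff M i + 1))

/-- Closed form for `hh` at position `M*j + s`, expressed via `J = 2^j`. -/
noncomputable def Hfun (α M J s : ℝ) : ℝ :=
  (J^2 - 1)/3 * M * (1 + α - 3*α*M) + (J - 1) * M * (2*α*M - α - 1)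
    + J^2 * (s*(1 - 2*α*M + α) - α*s^2) + J * s * (2*α*M - α - 1)

lemma one_le_two_pow_real (m : ℕ) : (1:ℝ) ≤ 2 ^ m :=
  by exact_mod_cast Nat.one_le_pow m 2 (by norm_num)

lemma qf_nonneg (M k : ℕ) : 0 ≤ qf M k := by
  unfold qf; positivity

lemma qf_le_one (M k : ℕ) : qf M k ≤ 1 := by
  unfold qf
  exact inv_le_one_of_one_le₀ (one_le_two_pow_real _)

lemma qf_mul (M k : ℕ) : qf M k * (2:ℝ)^(k/M) = 1 := by
  unfold qf
  rw [inv_mul_cancel₀]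
  positivity

lemma stepProb_eq_zero (q : ℕ → ℝ) : ∀ {n k : ℕ}, n < k → stepProb q n k = 0 := by
  intro n
  induction n with
  | zero =>
    intro k hk
    match k, hk with
    | (m+1), _ => rfl
  | succ n ih =>
    intro k hk
    match k, hk with
    | (m+1), hk =>
      show (1 - q (m+1)) * stepProb q n (m+1) + q m * stepProb q n m = 0
      rw [ih (by omega), ih (by omega)]
      ring

lemma step_sum (q : ℕ → ℝ) (w : ℕ → ℝ) (n : ℕ) :
    ∑ k ∈ Finset.range (n+2), stepProb q (n+1) k * w k
      = ∑ k ∈ Finset.range (n+1), stepProb q n k * ((1 - q k) * w k + q k * w (k+1)) := by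
  rw [Finset.sum_range_succ' (fun k => stepProb q (n+1) k * w k) (n+1)]
  have e1 : ∀ k, stepProb q (n+1) (k+1) * w (k+1)
      = (1 - q (k+1)) * stepProb q n (k+1) * w (k+1) + q k * stepProb q n k * w (k+1) := by
    intro k
    show ((1 - q (k+1)) * stepProb q n (k+1) + q k * stepProb q n k) * w (k+1) = _
    ring
  rw [Finset.sum_congr rfl (fun k _ => e1 k), Finset.sum_add_distrib]
  have e2 : ∑ k ∈ Finset.range (n+1), (1 - q (k+1)) * stepProb q n (k+1) * w (k+1)
      = (∑ k ∈ Finset.range (n+1), (1 - q k) * stepProb q n k * w k)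
        - (1 - q 0) * stepProb q n 0 * w 0 := by
    have h := Finset.sum_range_succ' (fun k => (1 - q k) * stepProb q n k * w k) (n+1)
    rw [Finset.sum_range_succ (fun k => (1 - q k) * stepProb q n k * w k) (n+1),
      stepProb_eq_zero q (lt_add_one n)] at h
    simp only [mul_zero, zero_mul, add_zero] at h
    linarith
  rw [e2]
  have e3 : ∀ k, stepProb q n k * ((1 - q k) * w k + q k * w (k+1))
      = (1 - q k) * stepProb q n k * w k + q k * stepProb q n k * w (k+1) := fun k => by ring
  rw [Finset.sum_congr rfl (fun k _ => e3 k), Finset.sum_add_distrib]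
  have e0 : stepProb q (n+1) 0 = (1 - q 0) * stepProb q n 0 := rfl
  rw [e0]
  ring

lemma stepProb_nonneg (M : ℕ) : ∀ n k, 0 ≤ stepProb (qf M) n k := by
  intro n
  induction n with
  | zero =>
    intro k
    match k with
    | 0 => norm_num [stepProb]
    | (m+1) => exact (stepProb_eq_zero (qf M) (Nat.succ_pos m)).ge
  | succ n ih =>
    intro k
    match k with
    | 0 =>
      show 0 ≤ (1 - qf M 0) * stepProb (qf M) n 0
      exact mul_nonneg (by linarith [qf_le_one M 0]) (ih 0)
    | (m+1) =>
      show 0 ≤ (1 - qf M (m+1)) * stepProb (qf M) n (m+1) + qf M m * stepProb (qf M) n m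
      have h1 := mul_nonneg (by linarith [qf_le_one M (m+1)] : (0:ℝ) ≤ 1 - qf M (m+1)) (ih (m+1))
      have h2 := mul_nonneg (qf_nonneg M m) (ih m)
      linarith

lemma sum_one (M : ℕ) : ∀ n, ∑ k ∈ Finset.range (n+1), stepProb (qf M) n k = 1 := by
  intro n
  induction n with
  | zero => simp [stepProb]
  | succ n ih =>
    have h := step_sum (qf M) (fun _ => 1) n
    simp only [mul_one] at h
    have e : ∀ k, stepProb (qf M) n k * ((1 - qf M k) + qf M k) = stepProb (qf M) n k := by
      intro k; ring
    rw [show n + 1 + 1 = n + 2 from rfl, h, Finset.sum_congr rfl (fun k _ => e k), ih]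

lemma exp_ff (M : ℕ) : ∀ n, ∑ k ∈ Finset.range (n+1), stepProb (qf M) n k * ff M k = n := by
  intro n
  induction n with
  | zero => simp [stepProb, ff]
  | succ n ih =>
    rw [show n + 1 + 1 = n + 2 from rfl, step_sum (qf M) (ff M) n]
    have e : ∀ k, (1 - qf M k) * ff M k + qf M k * ff M (k+1) = ff M k + 1 := by
      intro k
      have hstep : ff M (k+1) = ff M k + (2:ℝ)^(k/M) := Finset.sum_range_succ _ k
      rw [hstep]
      linear_combination qf_mul M k
    rw [Finset.sum_congr rfl (fun k _ => by rw [e k])]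
    have : ∀ k, stepProb (qf M) n k * (ff M k + 1)
        = stepProb (qf M) n k * ff M k + stepProb (qf M) n k := fun k => by ring
    rw [Finset.sum_congr rfl (fun k _ => this k), Finset.sum_add_distrib, ih, sum_one M n]
    push_cast
    ring

lemma exp_key (α : ℝ) (M : ℕ) :
    ∀ n, ∑ k ∈ Finset.range (n+1), stepProb (qf M) n k * (ff M k ^ 2 - hh α M k)
      = (1 + α) * (n:ℝ)^2 := by
  intro n
  induction n with
  | zero => simp [stepProb, ff, hh]
  | succ n ih =>
    rw [show n + 1 + 1 = n + 2 from rfl,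
      step_sum (qf M) (fun k => ff M k ^ 2 - hh α M k) n]
    have e : ∀ k, (1 - qf M k) * (ff M k ^ 2 - hh α M k)
        + qf M k * (ff M (k+1) ^ 2 - hh α M (k+1))
        = (ff M k ^ 2 - hh α M k) + (1 + α) * (2 * ff M k + 1) := by
      intro k
      have hstep : ff M (k+1) = ff M k + (2:ℝ)^(k/M) := Finset.sum_range_succ _ k
      have hstep2 : hh α M (k+1) = hh α M k
          + (2:ℝ)^(k/M) * (((2:ℝ)^(k/M) - 1) - α * (2 * ff M k + 1)) :=
        Finset.sum_range_succ _ k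
      rw [hstep, hstep2]
      linear_combination ((1 + α) * (2 * ff M k + 1)) * qf_mul M k
    rw [Finset.sum_congr rfl (fun k _ => by rw [e k])]
    have split : ∀ k, stepProb (qf M) n k * ((ff M k ^ 2 - hh α M k) + (1 + α) * (2 * ff M k + 1))
        = stepProb (qf M) n k * (ff M k ^ 2 - hh α M k)
          + (1 + α) * 2 * (stepProb (qf M) n k * ff M k) + (1 + α) * stepProb (qf M) n k := by
      intro k; ring
    rw [Finset.sum_congr rfl (fun k _ => split k), Finset.sum_add_distrib,
      Finset.sum_add_distrib, ih, ← Finset.mul_sum, ← Finset.mul_sum, exp_ff M n, sum_one M n]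
    push_cast
    ring

lemma ff_closed (M : ℕ) (hM : 0 < M) (k : ℕ) :
    ff M k = (M:ℝ) * ((2:ℝ)^(k/M) - 1) + ((k % M : ℕ):ℝ) * (2:ℝ)^(k/M) := by
  induction k with
  | zero => simp [ff]
  | succ k ih =>
    have hlt : k % M < M := Nat.mod_lt _ hM
    have hdm : M * (k / M) + k % M = k := Nat.div_add_mod k M
    have hstep : ff M (k+1) = ff M k + (2:ℝ)^(k/M) := Finset.sum_range_succ _ k
    by_cases hs : k % M + 1 = M
    · have hk1 : k + 1 = M * (k / M + 1) := by rw [Nat.mul_succ]; omega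
      have d1 : (k+1)/M = k/M + 1 := by rw [hk1, Nat.mul_div_cancel_left _ hM]
      have m1 : (k+1)%M = 0 := by rw [hk1, Nat.mul_mod_right]
      have hcast : ((k % M : ℕ):ℝ) = (M:ℝ) - 1 := by
        have := congrArg (fun x : ℕ => (x:ℝ)) hs
        push_cast at this
        linarith
      rw [hstep, ih, d1, m1, hcast, pow_succ]
      push_cast
      ring
    · have hk1 : k + 1 = (k % M + 1) + M * (k / M) := by omega
      have hlt1 : k % M + 1 < M := by omega
      have d2 : (k+1)/M = k/M := by
        rw [hk1, Nat.add_mul_div_left _ _ hM, Nat.div_eq_of_lt hlt1, zero_add]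
      have m2 : (k+1)%M = k % M + 1 := by
        rw [hk1, Nat.add_mul_mod_self_left, Nat.mod_eq_of_lt hlt1]
      rw [hstep, ih, d2, m2]
      push_cast
      ring

lemma hh_closed (α : ℝ) (M : ℕ) (hM : 0 < M) (k : ℕ) :
    hh α M k = Hfun α (M:ℝ) ((2:ℝ)^(k/M)) ((k % M : ℕ):ℝ) := by
  induction k with
  | zero => simp [hh, Hfun]
  | succ k ih =>
    have hdm : M * (k / M) + k % M = k := Nat.div_add_mod k M
    have hstep : hh α M (k+1) = hh α M k
        + (2:ℝ)^(k/M) * (((2:ℝ)^(k/M) - 1) - α * (2 * ff M k + 1)) :=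
      Finset.sum_range_succ _ k
    rw [hstep, ih, ff_closed M hM k]
    by_cases hs : k % M + 1 = M
    · have hk1 : k + 1 = M * (k / M + 1) := by rw [Nat.mul_succ]; omega
      have d1 : (k+1)/M = k/M + 1 := by rw [hk1, Nat.mul_div_cancel_left _ hM]
      have m1 : (k+1)%M = 0 := by rw [hk1, Nat.mul_mod_right]
      have hcast : ((k % M : ℕ):ℝ) = (M:ℝ) - 1 := by
        have := congrArg (fun x : ℕ => (x:ℝ)) hs
        push_cast at this
        linarith
      rw [d1, m1, hcast, pow_succ, Hfun, Hfun]
      push_cast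
      ring
    · have hlt : k % M < M := Nat.mod_lt _ hM
      have hk1 : k + 1 = (k % M + 1) + M * (k / M) := by omega
      have hlt1 : k % M + 1 < M := by omega
      have d2 : (k+1)/M = k/M := by
        rw [hk1, Nat.add_mul_div_left _ _ hM, Nat.div_eq_of_lt hlt1, zero_add]
      have m2 : (k+1)%M = k % M + 1 := by
        rw [hk1, Nat.add_mul_mod_self_left, Nat.mod_eq_of_lt hlt1]
      rw [d2, m2, Hfun, Hfun]
      push_cast
      ring

lemma Hfun_le (M J s : ℝ) (hM : 1 ≤ M) (hJ : 1 ≤ J) (hs0 : 0 ≤ s) :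
    Hfun (3/(8*M-3)) M J s ≤ M^2/(3*(8*M-3)) := by
  have h8 : (0:ℝ) < 8*M - 3 := by linarith
  rw [← sub_nonneg]
  have expand : M^2/(3*(8*M-3)) - Hfun (3/(8*M-3)) M J s
      = (J^2*(M - 3*s)^2/3 + 2*M^2*(J-1) + 2*M*J*s) / (8*M-3) := by
    rw [Hfun, eq_div_iff h8.ne', show M^2/(3*(8*M-3)) = M^2 * (3/(8*M-3)) / 9 by field_simp; ring]
    have ha : 3/(8*M-3) * (8*M-3) = 3 := div_mul_cancel₀ _ h8.ne'
    linear_combination (M^2/9 - ((J^2-1)/3*M*(1-3*M) + (J-1)*M*(2*M-1) + J^2*(-2*M*s + s - s^2) + J*s*(2*M-1))) * ha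
  rw [expand]
  apply div_nonneg _ (le_of_lt h8)
  have h1 : 0 ≤ J^2*(M-3*s)^2/3 := by positivity
  have h2 : 0 ≤ 2*M^2*(J-1) := by nlinarith
  have h3 : 0 ≤ 2*M*J*s := by nlinarith
  linarith

lemma Hfun_ge (M J s : ℝ) (hM : 1 ≤ M) (hJ : 0 ≤ J) (hs0 : 0 ≤ s) (hs : s ≤ M) :
    -(M/(3*M-1)) * (M*(J-1) + s*J) ≤ Hfun (1/(3*M-1)) M J s := by
  have h3 : (0:ℝ) < 3*M - 1 := by linarith
  rw [← sub_nonneg]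
  have expand : Hfun (1/(3*M-1)) M J s - (-(M/(3*M-1)) * (M*(J-1) + s*J))
      = J^2 * s * (M - s) / (3*M-1) := by
    rw [Hfun]
    field_simp
    ring
  rw [expand]
  apply div_nonneg _ (le_of_lt h3)
  have : 0 ≤ M - s := by linarith
  positivity

lemma sqrt_add_le (x y : ℝ) (hx : 0 ≤ x) (hy : 0 ≤ y) :
    Real.sqrt (x + y) ≤ Real.sqrt x + Real.sqrt y := by
  have h : Real.sqrt (x + y) ≤ Real.sqrt ((Real.sqrt x + Real.sqrt y)^2) := by
    apply Real.sqrt_le_sqrt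
    have hx2 := Real.sq_sqrt hx
    have hy2 := Real.sq_sqrt hy
    nlinarith [Real.sqrt_nonneg x, Real.sqrt_nonneg y,
      mul_nonneg (Real.sqrt_nonneg x) (Real.sqrt_nonneg y)]
  rwa [Real.sqrt_sq (by positivity)] at h

end Stmt18Aux

open Stmt18Aux in
/-- For the floating-point counter with parameter `M = 2^d`
(transition probability `2^{-⌊k/M⌋}` from state `k`) and unbiased estimator
`f k = ∑_{i<k} 2^{⌊i/M⌋}` (so `E[f(X_n)] = n`), the accuracy
`A n = sqrt(Var f(X_n))/n` with `Var f(X_n) = E[f(X_n)^2] − n^2` satisfies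
`limsup A ≤ sqrt(3/(8M − 3))` and `liminf A ≥ sqrt(1/(3M − 1))`. -/
theorem stmt_18 (d : ℕ) (M : ℕ) (hM : M = 2 ^ d)
    (q : ℕ → ℝ) (hq : ∀ k, q k = ((2 : ℝ) ^ (k / M))⁻¹)
    (f : ℕ → ℝ) (hf : ∀ k, f k = ∑ i ∈ Finset.range k, (2 : ℝ) ^ (i / M))
    (A : ℕ → ℝ)
    (hA : ∀ n, A n =
      Real.sqrt ((∑ k ∈ Finset.range (n + 1), stepProb q n k * (f k) ^ 2) - (n : ℝ) ^ 2) / n) :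
    Filter.limsup A Filter.atTop ≤ Real.sqrt (3 / (8 * (M : ℝ) - 3)) ∧
      Filter.liminf A Filter.atTop ≥ Real.sqrt (1 / (3 * (M : ℝ) - 1)) := by
  have hM0 : 0 < M := hM ▸ Nat.pow_pos (n := d) (by norm_num)
  have hM1 : (1:ℝ) ≤ M := by exact_mod_cast hM0
  have hq' : q = qf M := funext fun k => hq k
  have hf' : f = ff M := funext fun k => hf k
  subst hq' hf'
  set α : ℝ := 3/(8*(M:ℝ)-3) with hα
  set β : ℝ := 1/(3*(M:ℝ)-1) with hβ
  set c0 : ℝ := (M:ℝ)^2/(3*(8*(M:ℝ)-3)) with hc0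
  set c1 : ℝ := (M:ℝ)/(3*(M:ℝ)-1) with hc1
  have h8 : (0:ℝ) < 8*(M:ℝ) - 3 := by linarith
  have h3 : (0:ℝ) < 3*(M:ℝ) - 1 := by linarith
  have hα0 : 0 ≤ α := by positivity
  have hc00 : 0 ≤ c0 := by positivity
  have hc10 : 0 ≤ c1 := by positivity
  -- pointwise bounds on hh
  have hh_le : ∀ k, hh α M k ≤ c0 := by
    intro k
    rw [hh_closed α M hM0 k]
    exact Hfun_le (M:ℝ) _ _ hM1 (one_le_two_pow_real _) (Nat.cast_nonneg _)
  have hh_ge : ∀ k, -(c1 * ff M k) ≤ hh β M k := by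
    intro k
    rw [hh_closed β M hM0 k, ff_closed M hM0 k]
    have hs : ((k % M : ℕ):ℝ) ≤ (M:ℝ) := by
      exact_mod_cast (Nat.mod_lt _ hM0).le
    have := Hfun_ge (M:ℝ) ((2:ℝ)^(k/M)) ((k % M : ℕ):ℝ) hM1 (by positivity)
      (Nat.cast_nonneg _) hs
    calc -(c1 * ((M:ℝ) * ((2:ℝ)^(k/M) - 1) + ((k % M : ℕ):ℝ) * (2:ℝ)^(k/M)))
        = -((M:ℝ)/(3*(M:ℝ)-1)) * ((M:ℝ)*((2:ℝ)^(k/M) - 1) + ((k % M : ℕ):ℝ)*(2:ℝ)^(k/M)) := by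
          rw [hc1]; ring
      _ ≤ _ := this
  -- variance bounds
  have var_ub : ∀ n : ℕ,
      (∑ k ∈ Finset.range (n+1), stepProb (qf M) n k * (ff M k) ^ 2) - (n:ℝ)^2
        ≤ α * (n:ℝ)^2 + c0 := by
    intro n
    have hkey := exp_key α M n
    have hsplit : ∑ k ∈ Finset.range (n+1), stepProb (qf M) n k * (ff M k ^ 2 - hh α M k)
        = (∑ k ∈ Finset.range (n+1), stepProb (qf M) n k * (ff M k) ^ 2)
          - ∑ k ∈ Finset.range (n+1), stepProb (qf M) n k * hh α M k := by
      rw [← Finset.sum_sub_distrib]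
      exact Finset.sum_congr rfl fun k _ => by ring
    have hhub : ∑ k ∈ Finset.range (n+1), stepProb (qf M) n k * hh α M k ≤ c0 := by
      calc ∑ k ∈ Finset.range (n+1), stepProb (qf M) n k * hh α M k
          ≤ ∑ k ∈ Finset.range (n+1), stepProb (qf M) n k * c0 :=
            Finset.sum_le_sum fun k _ =>
              mul_le_mul_of_nonneg_left (hh_le k) (stepProb_nonneg M n k)
        _ = c0 := by rw [← Finset.sum_mul, sum_one M n, one_mul]
    rw [hsplit] at hkey
    linarith
  have var_lb : ∀ n : ℕ,
      β * (n:ℝ)^2 - c1 * n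
        ≤ (∑ k ∈ Finset.range (n+1), stepProb (qf M) n k * (ff M k) ^ 2) - (n:ℝ)^2 := by
    intro n
    have hkey := exp_key β M n
    have hsplit : ∑ k ∈ Finset.range (n+1), stepProb (qf M) n k * (ff M k ^ 2 - hh β M k)
        = (∑ k ∈ Finset.range (n+1), stepProb (qf M) n k * (ff M k) ^ 2)
          - ∑ k ∈ Finset.range (n+1), stepProb (qf M) n k * hh β M k := by
      rw [← Finset.sum_sub_distrib]
      exact Finset.sum_congr rfl fun k _ => by ring
    have hhlb : -(c1 * n) ≤ ∑ k ∈ Finset.range (n+1), stepProb (qf M) n k * hh β M k := by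
      calc -(c1 * (n:ℝ))
          = ∑ k ∈ Finset.range (n+1), stepProb (qf M) n k * (-(c1 * ff M k)) := by
            rw [show (fun k => stepProb (qf M) n k * (-(c1 * ff M k)))
                = fun k => (-c1) * (stepProb (qf M) n k * ff M k) from funext fun k => by ring]
            rw [← Finset.mul_sum, exp_ff M n]
            ring
        _ ≤ _ := Finset.sum_le_sum fun k _ =>
            mul_le_mul_of_nonneg_left (hh_ge k) (stepProb_nonneg M n k)
    rw [hsplit] at hkey
    linarith
  -- A bounds
  have hA_nonneg : ∀ n, 0 ≤ A n := fun n => by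
    rw [hA n]; exact div_nonneg (Real.sqrt_nonneg _) (Nat.cast_nonneg _)
  have hAub : ∀ n : ℕ, 1 ≤ n → A n ≤ Real.sqrt α + Real.sqrt c0 / n := by
    intro n hn
    have hn' : (0:ℝ) < n := by exact_mod_cast hn
    rw [hA n, div_le_iff₀ hn']
    have step1 : Real.sqrt ((∑ k ∈ Finset.range (n+1), stepProb (qf M) n k * (ff M k) ^ 2)
          - (n:ℝ)^2) ≤ Real.sqrt (α * (n:ℝ)^2 + c0) := Real.sqrt_le_sqrt (var_ub n)
    have step2 : Real.sqrt (α * (n:ℝ)^2 + c0) ≤ Real.sqrt (α * (n:ℝ)^2) + Real.sqrt c0 :=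
      sqrt_add_le _ _ (by positivity) hc00
    have step3 : Real.sqrt (α * (n:ℝ)^2) = Real.sqrt α * n := by
      rw [Real.sqrt_mul hα0, Real.sqrt_sq (le_of_lt hn')]
    have : (Real.sqrt α + Real.sqrt c0 / n) * n = Real.sqrt α * n + Real.sqrt c0 := by
      field_simp
    rw [this]
    calc Real.sqrt _ ≤ Real.sqrt (α * (n:ℝ)^2 + c0) := step1
      _ ≤ Real.sqrt (α * (n:ℝ)^2) + Real.sqrt c0 := step2
      _ = Real.sqrt α * n + Real.sqrt c0 := by rw [step3]
  have hAlb : ∀ n : ℕ, 1 ≤ n → Real.sqrt (β - c1 / n) ≤ A n := by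
    intro n hn
    have hn' : (0:ℝ) < n := by exact_mod_cast hn
    by_cases hc : β - c1 / (n:ℝ) ≤ 0
    · rw [Real.sqrt_eq_zero'.mpr hc]
      exact hA_nonneg n
    · push_neg at hc
      have hfact : β * (n:ℝ)^2 - c1 * n = (β - c1/n) * (n:ℝ)^2 := by field_simp
      have hsq : Real.sqrt (β - c1/n) = Real.sqrt (β * (n:ℝ)^2 - c1 * n) / n := by
        rw [hfact, Real.sqrt_mul (le_of_lt hc), Real.sqrt_sq (le_of_lt hn'),
          mul_div_cancel_right₀ _ (ne_of_gt hn')]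
      rw [hsq, hA n]
      exact (div_le_div_iff_of_pos_right hn').mpr (Real.sqrt_le_sqrt (var_lb n))
  -- limits of the bounding sequences
  have hBtend : Filter.Tendsto (fun n : ℕ => Real.sqrt α + Real.sqrt c0 / n)
      Filter.atTop (nhds (Real.sqrt α)) := by
    have : Filter.Tendsto (fun n : ℕ => Real.sqrt c0 / n) Filter.atTop (nhds 0) :=
      Filter.Tendsto.div_atTop tendsto_const_nhds tendsto_natCast_atTop_atTop
    simpa using tendsto_const_nhds.add this
  have hCtend : Filter.Tendsto (fun n : ℕ => Real.sqrt (β - c1 / n))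
      Filter.atTop (nhds (Real.sqrt β)) := by
    have h1 : Filter.Tendsto (fun n : ℕ => β - c1 / n) Filter.atTop (nhds β) := by
      have : Filter.Tendsto (fun n : ℕ => c1 / (n:ℝ)) Filter.atTop (nhds 0) :=
        Filter.Tendsto.div_atTop tendsto_const_nhds tendsto_natCast_atTop_atTop
      simpa using tendsto_const_nhds.sub this
    exact h1.sqrt
  have hevub : ∀ᶠ n in Filter.atTop, A n ≤ Real.sqrt α + Real.sqrt c0 / n :=
    Filter.eventually_atTop.mpr ⟨1, hAub⟩
  have hevlb : ∀ᶠ n : ℕ in Filter.atTop, Real.sqrt (β - c1 / (n:ℝ)) ≤ A n :=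
    Filter.eventually_atTop.mpr ⟨1, hAlb⟩
  have hcoA_le : Filter.IsCoboundedUnder (· ≤ ·) Filter.atTop A :=
    Filter.isCoboundedUnder_le_of_le _ fun n => hA_nonneg n
  have hAbdd : ∀ᶠ n in Filter.atTop, A n ≤ Real.sqrt α + Real.sqrt c0 := by
    filter_upwards [hevub, Filter.eventually_ge_atTop 1] with n h1 h2
    have : Real.sqrt c0 / (n:ℝ) ≤ Real.sqrt c0 := by
      apply div_le_self (Real.sqrt_nonneg _)
      exact_mod_cast h2
    linarith
  have hcoA_ge : Filter.IsCoboundedUnder (· ≥ ·) Filter.atTop A :=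
    Filter.isCoboundedUnder_ge_of_eventually_le _ hAbdd
  have hCbdd : Filter.IsBoundedUnder (· ≥ ·) Filter.atTop
      (fun n : ℕ => Real.sqrt (β - c1 / n)) :=
    hCtend.isBoundedUnder_ge
  constructor
  · calc Filter.limsup A Filter.atTop
        ≤ Filter.limsup (fun n : ℕ => Real.sqrt α + Real.sqrt c0 / n) Filter.atTop :=
          Filter.limsup_le_limsup hevub hcoA_le hBtend.isBoundedUnder_le
      _ = Real.sqrt α := hBtend.limsup_eq
  · calc Real.sqrt (1 / (3 * (M:ℝ) - 1))
        = Filter.liminf (fun n : ℕ => Real.sqrt (β - c1 / n)) Filter.atTop :=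
          (hCtend.liminf_eq).symm
      _ ≤ Filter.liminf A Filter.atTop :=
          Filter.liminf_le_liminf hevlb hCbdd hcoA_ge
end
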